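/- Set λ := 1 + √(L^x/μ^x) + √(L^y/μ^y) + Λ^xx/μ^x + Λ^xy/√(μ^x μ^y) + Λ^yy/μ^y, and suppose F has a saddle point (x⋆, y⋆). Then the iterates of the explicit extragradient recursion satisfy, for every t ≥ 0: μ^x V_{z^x_t}(x⋆) + μ^y V_{z^y_t}(y⋆) + V^f_{x⋆}(z^f_t) + V^g_{y⋆}(z^g_t) ≤ (λ/(1+λ))^t · (μ^x V_{z^x_0}(x⋆) + μ^y V_{z^y_0}(y⋆) + V^f_{x⋆}(z^f_0) + V^g_{y⋆}(z^g_0)). -/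

import Mathlib

open scoped RealInnerProductSpace

/-!
With the potential `P_t = μˣ V_{zˣ_t}(x⋆) + μʸ V_{zʸ_t}(y⋆) + V^f_{x⋆}(z^f_t) + V^g_{y⋆}(z^g_t)`
it suffices to show `(1 + λ) P_{t+1} ≤ λ P_t`.

Each block of the recursion is treated on its own, with the coupling entering only as a vector
field. Three-point identities for the squared distance and for the Bregman divergence, together
with the stationarity condition `μˣ x⋆ + ∇f(x⋆) + ∇ₓh(x⋆, y⋆) = 0`, turn `(1 + λ) P_{t+1} - λ P_t`
into an exact expression whose only indefinite term is the change of the operator between the two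
half-steps. Cauchy–Schwarz, co-coercivity `‖∇f u - ∇f v‖² ≤ 2 Lˣ V^f_v(u)` and Young's inequality
bound that term, and the choice of `λ` absorbs all the resulting contributions. Adding the two
blocks, the cross terms in `Λˣʸ` cancel, and the remaining coupling term is nonpositive by
monotonicity of the gradient field `(∇ₓh, -∇_y h)` of the convex-concave function `h`.
-/

/-- Bregman divergence `V^φ_u(v) = φ(v) - φ(u) - ⟪∇φ(u), v - u⟫`, with explicit gradient `φ'`. -/
noncomputable def breg {X : Type*} [NormedAddCommGroup X] [InnerProductSpace ℝ X]
    (φ : X → ℝ) (φ' : X → X) (u v : X) : ℝ :=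
  φ v - φ u - ⟪φ' u, v - u⟫

section InnerProductSpace

variable {E : Type*} [NormedAddCommGroup E] [InnerProductSpace ℝ E]

theorem three_point_identity (a b c : E) :
    ⟪a - b, b - c⟫ = 1 / 2 * ‖a - c‖ ^ 2 - 1 / 2 * ‖b - c‖ ^ 2 - 1 / 2 * ‖a - b‖ ^ 2 := by
  have h : ‖a - c‖ ^ 2 = ‖(a - b) + (b - c)‖ ^ 2 := by rw [sub_add_sub_cancel]
  rw [norm_add_sq_real] at h
  linarith

theorem mul_le_of_sq_le_two_mul {a b r μ B : ℝ} (hr : 0 ≤ r) (hμ : 0 < μ)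
    (ha : a ^ 2 ≤ 2 * (r ^ 2 * μ) * B) : a * b ≤ r * (B + μ * (1 / 2 * b ^ 2)) := by
  rcases hr.eq_or_lt with rfl | hr
  · have : a = 0 := by nlinarith
    simp [this]
  · nlinarith [sq_nonneg (a - r * μ * b), mul_pos hr hμ]

theorem inner_smul_add_add_le {μ ν α r c δ B : ℝ} {a w Δf ΔG : E} (hμ : 0 < μ) (hν : 0 ≤ ν)
    (hα : 0 ≤ α) (hr : 0 ≤ r) (hc : 0 ≤ c) (hΔf : ‖Δf‖ ^ 2 ≤ 2 * (r ^ 2 * μ) * B)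
    (hΔG : ‖ΔG‖ ≤ α * ‖a‖ + c * (√μ * √ν) * δ) :
    ⟪μ • a + Δf + ΔG, w⟫ ≤ (μ + α) * (1 / 2 * ‖a‖ ^ 2 + 1 / 2 * ‖w‖ ^ 2)
      + r * (B + μ * (1 / 2 * ‖w‖ ^ 2)) + c * (ν * (1 / 2 * δ ^ 2) + μ * (1 / 2 * ‖w‖ ^ 2)) := by
  have hcs : ⟪μ • a + Δf + ΔG, w⟫ ≤ (μ * ‖a‖ + ‖Δf‖ + ‖ΔG‖) * ‖w‖ := by
    refine (real_inner_le_norm _ _).trans (mul_le_mul_of_nonneg_right ?_ (norm_nonneg w))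
    refine (norm_add₃_le ..).trans_eq ?_
    rw [norm_smul, Real.norm_of_nonneg hμ.le]
  have haw : ‖a‖ * ‖w‖ ≤ 1 / 2 * ‖a‖ ^ 2 + 1 / 2 * ‖w‖ ^ 2 := by
    nlinarith [two_mul_le_add_sq ‖a‖ ‖w‖]
  have hδw : √μ * √ν * δ * ‖w‖ ≤ ν * (1 / 2 * δ ^ 2) + μ * (1 / 2 * ‖w‖ ^ 2) := by
    nlinarith [two_mul_le_add_sq (√ν * δ) (√μ * ‖w‖), Real.sq_sqrt hμ.le, Real.sq_sqrt hν]
  linarith [mul_le_of_sq_le_two_mul hr hμ hΔf (b := ‖w‖), mul_le_mul_of_nonneg_left haw hμ.le,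
    mul_le_mul_of_nonneg_left haw hα, mul_le_mul_of_nonneg_left hδw hc,
    mul_le_mul_of_nonneg_right hΔG (norm_nonneg w), norm_nonneg w]

variable {f : E → ℝ} {f' : E → E}

theorem extragradient_block_identity {lam μ : ℝ} {x z x' z' x'' z'' s G G' Gs : E}
    (hx' : (lam * μ) • (x - x') = μ • x + f' z + G)
    (hx'' : μ • (x' - x'') + (lam * μ) • (x - x'') = μ • x' + f' z' + G')
    (hz'' : (1 + lam) • z'' = lam • z + x') (hs : f' s + Gs + μ • s = 0) :
    (1 + lam) * (μ * (1 / 2 * ‖x'' - s‖ ^ 2) + breg f f' s z'')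
      = lam * (μ * (1 / 2 * ‖x - s‖ ^ 2) + breg f f' s z) - ⟪G' - Gs, x' - s⟫
        + ⟪μ • (x' - x) + (f' z' - f' z) + (G' - G), x' - x''⟫
        + ((1 + lam) * breg f f' z' z'' - lam * breg f f' z' z - breg f f' z' s)
        - μ * (1 / 2 * ‖x' - s‖ ^ 2) - (1 + lam) * μ * (1 / 2 * ‖x' - x''‖ ^ 2)
        - lam * μ * (1 / 2 * ‖x' - x‖ ^ 2) := by
  set v := μ • x + f' z + G
  set v' := μ • x' + f' z' + G'
  have hdiff : μ • (x' - x) + (f' z' - f' z) + (G' - G) = v' - v := by module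
  have e0 : ⟪v' - v, x' - x''⟫ = ⟪v', x' - s⟫ - ⟪v', x'' - s⟫ - ⟪v, x' - x''⟫ := by
    rw [inner_sub_left, ← inner_sub_right, sub_sub_sub_cancel_right]
  have e1 : ⟪v', x'' - s⟫ = μ * ⟪x' - x'', x'' - s⟫ + lam * μ * ⟪x - x'', x'' - s⟫ := by
    rw [← hx'', inner_add_left, real_inner_smul_left, real_inner_smul_left]
  have e2 : ⟪v', x' - s⟫ = μ * ‖x' - s‖ ^ 2 + ⟪f' z' - f' s, x' - s⟫ + ⟪G' - Gs, x' - s⟫ := by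
    have : v' = μ • (x' - s) + (f' z' - f' s) + (G' - Gs) := by
      linear_combination (norm := module) hs
    rw [this, inner_add_left, inner_add_left, real_inner_smul_left, real_inner_self_eq_norm_sq]
  have e3 : ⟪v, x' - x''⟫ = lam * μ * ⟪x - x', x' - x''⟫ := by
    rw [← hx', real_inner_smul_left]
  have e4 : (1 + lam) * breg f f' s z'' - lam * breg f f' s z - ⟪f' z' - f' s, x' - s⟫
      = (1 + lam) * breg f f' z' z'' - lam * breg f f' z' z - breg f f' z' s := by
    have k : ∀ u, (1 + lam) * ⟪u, z''⟫ = lam * ⟪u, z⟫ + ⟪u, x'⟫ := fun u => by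
      simpa only [real_inner_smul_right, inner_add_right] using congrArg (⟪u, ·⟫) hz''
    simp only [breg, inner_sub_left, inner_sub_right]
    linear_combination k (f' z') - k (f' s)
  rw [hdiff, e0, e1, e2, e3, three_point_identity x' x'' s, three_point_identity x x'' s,
    three_point_identity x x' x'', norm_sub_rev x x']
  linear_combination e4

end InnerProductSpace

section Gradient

variable {E : Type*} [NormedAddCommGroup E] [InnerProductSpace ℝ E] [CompleteSpace E]
  {φ ψ : E → ℝ} {φ' ψ' x : E}

theorem HasGradientAt.add (hφ : HasGradientAt φ φ' x) (hψ : HasGradientAt ψ ψ' x) :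
    HasGradientAt (fun y => φ y + ψ y) (φ' + ψ') x := by
  rw [hasGradientAt_iff_hasFDerivAt, map_add]
  exact hφ.hasFDerivAt.add hψ.hasFDerivAt

theorem HasGradientAt.neg (hφ : HasGradientAt φ φ' x) :
    HasGradientAt (fun y => -φ y) (-φ') x := by
  rw [hasGradientAt_iff_hasFDerivAt, map_neg]
  exact hφ.hasFDerivAt.neg

theorem HasGradientAt.add_half_mul_norm_sq (hφ : HasGradientAt φ φ' x) (μ : ℝ) :
    HasGradientAt (fun y => φ y + μ / 2 * ‖y‖ ^ 2) (φ' + μ • x) x := by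
  rw [hasGradientAt_iff_hasFDerivAt] at *
  refine (hφ.add ((hasStrictFDerivAt_norm_sq x).hasFDerivAt.const_mul (μ / 2))).congr_fderiv ?_
  ext y
  simp only [add_apply, InnerProductSpace.toDual_apply_apply, smul_apply, coe_innerSL_apply,
    nsmul_eq_mul, Nat.cast_ofNat, smul_eq_mul, map_add, map_smul, add_right_inj]
  ring

theorem HasGradientAt.eq_zero_of_forall_le (hφ : HasGradientAt φ φ' x) (hmin : ∀ y, φ x ≤ φ y) :
    φ' = 0 := by
  have h := IsLocalMin.hasFDerivAt_eq_zero (Filter.Eventually.of_forall hmin)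
    (hasGradientAt_iff_hasFDerivAt.mp hφ)
  exact (InnerProductSpace.toDual ℝ E).map_eq_zero_iff.mp h

theorem HasGradientAt.hasDerivAt_add_smul {d : E} {t : ℝ} (hφ : HasGradientAt φ φ' (x + t • d)) :
    HasDerivAt (fun s : ℝ => φ (x + s • d)) ⟪φ', d⟫ t := by
  have hline : HasDerivAt (fun s : ℝ => x + s • d) d t := by
    simpa using ((hasDerivAt_id t).smul_const d).const_add x
  simpa [Function.comp_def] using hφ.hasFDerivAt.comp_hasDerivAt t hline

end Gradient

section ConvexSmooth

variable {E : Type*} [NormedAddCommGroup E] [InnerProductSpace ℝ E] [CompleteSpace E]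
  {f : E → ℝ} {f' : E → E} {L : ℝ}

theorem breg_nonneg (hf : ConvexOn ℝ Set.univ f) {u : E} (hu : HasGradientAt f (f' u) u) (v : E) :
    0 ≤ breg f f' u v := by
  have hline : ConvexOn ℝ Set.univ (fun t : ℝ => f (u + t • (v - u))) := by
    have hcomp : (fun t : ℝ => f (u + t • (v - u))) = f ∘ AffineMap.lineMap u v := by
      funext t
      simp [AffineMap.lineMap_apply, add_comm]
    simpa only [hcomp, Set.preimage_univ] using hf.comp_affineMap (AffineMap.lineMap u v)
  have hd : HasDerivAt (fun t : ℝ => f (u + t • (v - u))) ⟪f' u, v - u⟫ 0 :=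
    HasGradientAt.hasDerivAt_add_smul (by simpa using hu)
  have hs := hline.le_slope_of_hasDerivAt (Set.mem_univ 0) (Set.mem_univ 1) one_pos hd
  simp only [slope_def_field, zero_smul, add_zero, one_smul, add_sub_cancel, sub_zero,
    div_one] at hs
  unfold breg
  linarith

theorem breg_le_of_lipschitz (hf' : ∀ x, HasGradientAt f (f' x) x)
    (hL : ∀ a b, ‖f' a - f' b‖ ≤ L * ‖a - b‖) (u v : E) :
    breg f f' u v ≤ L / 2 * ‖v - u‖ ^ 2 := by
  set d := v - u
  set ψ : ℝ → ℝ := fun t => f (u + t • d) - t * ⟪f' u, d⟫ - L / 2 * t ^ 2 * ‖d‖ ^ 2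
  have hψ : ∀ t, HasDerivAt ψ (⟪f' (u + t • d), d⟫ - ⟪f' u, d⟫ - L * t * ‖d‖ ^ 2) t := by
    intro t
    have h := (((hf' (u + t • d)).hasDerivAt_add_smul).sub
      ((hasDerivAt_id t).mul_const ⟪f' u, d⟫)).sub
      (((hasDerivAt_pow 2 t).const_mul (L / 2)).mul_const (‖d‖ ^ 2))
    exact h.congr_deriv (by rw [show (2 : ℕ) - 1 = 1 from rfl]; push_cast; ring)
  have hanti : AntitoneOn ψ (Set.Ici 0) := by
    refine antitoneOn_of_hasDerivWithinAt_nonpos (convex_Ici 0)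
      (fun t _ => (hψ t).continuousAt.continuousWithinAt) (fun t _ => (hψ t).hasDerivWithinAt) ?_
    intro t ht
    rw [interior_Ici, Set.mem_Ioi] at ht
    have hlip : ‖f' (u + t • d) - f' u‖ ≤ L * t * ‖d‖ := by
      simpa [norm_smul, abs_of_pos ht, mul_assoc] using hL (u + t • d) u
    have := real_inner_le_norm (f' (u + t • d) - f' u) d
    rw [inner_sub_left] at this
    nlinarith [norm_nonneg d]
  have h01 := hanti Set.self_mem_Ici (Set.mem_Ici.mpr zero_le_one) zero_le_one
  norm_num [ψ, d] at h01
  unfold breg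
  linarith

theorem sq_norm_sub_le_two_mul_breg (hf : ConvexOn ℝ Set.univ f)
    (hf' : ∀ x, HasGradientAt f (f' x) x) (hL0 : 0 ≤ L)
    (hL : ∀ a b, ‖f' a - f' b‖ ≤ L * ‖a - b‖) (u v : E) :
    ‖f' u - f' v‖ ^ 2 ≤ 2 * L * breg f f' v u := by
  rcases hL0.eq_or_lt with rfl | hLpos
  · have h : ‖f' u - f' v‖ = 0 := le_antisymm (by simpa using hL u v) (norm_nonneg _)
    simp [h]
  set Δ := f' u - f' v
  set w := u - L⁻¹ • Δ
  have hwu : w - u = -(L⁻¹ • Δ) := by simp [w]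
  have hsplit : breg f f' v u = breg f f' v w - breg f f' u w + L⁻¹ * ‖Δ‖ ^ 2 := by
    have hwv : w - v = (u - v) - L⁻¹ • Δ := by simp only [w]; abel
    simp only [breg, hwu, hwv, inner_sub_right, inner_neg_right, real_inner_smul_right]
    have : ⟪f' u, Δ⟫ - ⟪f' v, Δ⟫ = ‖Δ‖ ^ 2 := by
      rw [← inner_sub_left, real_inner_self_eq_norm_sq]
    linear_combination L⁻¹ * this
  have hvw := breg_nonneg hf (hf' v) w
  have huw := breg_le_of_lipschitz hf' hL u w
  rw [hwu, norm_neg, norm_smul, Real.norm_eq_abs, abs_of_pos (inv_pos.2 hLpos), mul_pow] at huw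
  have h1 : 2 * L * (L⁻¹ * ‖Δ‖ ^ 2) = 2 * ‖Δ‖ ^ 2 := by field_simp
  have h2 : 2 * L * (L / 2 * (L⁻¹ ^ 2 * ‖Δ‖ ^ 2)) = ‖Δ‖ ^ 2 := by field_simp
  rw [hsplit]
  linarith [mul_le_mul_of_nonneg_left huw (by positivity : (0 : ℝ) ≤ 2 * L),
    mul_nonneg hLpos.le hvw]

theorem breg_extrapolation_le (hf : ConvexOn ℝ Set.univ f) (hf' : ∀ x, HasGradientAt f (f' x) x)
    (hL : ∀ a b, ‖f' a - f' b‖ ≤ L * ‖a - b‖) {lam : ℝ} (hlam : 0 < lam) {x x' z z' z'' : E}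
    (hz' : lam • z' = (lam - 1) • z + x) (hz'' : (1 + lam) • z'' = lam • z + x') :
    (1 + lam) * breg f f' z' z'' ≤ L / lam * (1 / 2 * ‖x' - x‖ ^ 2) + breg f f' z' z := by
  set w := z' + lam⁻¹ • (x' - x)
  have h1lam : 0 < 1 + lam := by linarith
  have hw : (1 + lam) • z'' = lam • w + z := by
    rw [hz'', smul_add, smul_smul, mul_inv_cancel₀ hlam.ne', one_smul, hz']
    abel_nf
    module
  have hz''w : z'' = (lam / (1 + lam)) • w + (1 / (1 + lam)) • z := by
    apply smul_right_injective E h1lam.ne'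
    simp only [hw, smul_add, smul_smul]
    match_scalars <;> field_simp
  have hconv := hf.2 (Set.mem_univ w) (Set.mem_univ z) (by positivity : 0 ≤ lam / (1 + lam))
    (by positivity : 0 ≤ 1 / (1 + lam)) (by field_simp; ring)
  rw [← hz''w, smul_eq_mul, smul_eq_mul] at hconv
  have hlin : (1 + lam) * ⟪f' z', z'' - z'⟫ = lam * ⟪f' z', w - z'⟫ + ⟪f' z', z - z'⟫ := by
    have hv : (1 + lam) • (z'' - z') = lam • (w - z') + (z - z') := by
      rw [smul_sub, hw]
      module
    simpa only [real_inner_smul_right, inner_add_right] using congrArg (⟪f' z', ·⟫) hv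
  have hdesc := breg_le_of_lipschitz hf' hL z' w
  rw [show w - z' = lam⁻¹ • (x' - x) by simp [w], norm_smul, Real.norm_eq_abs,
    abs_of_pos (inv_pos.2 hlam), mul_pow] at hdesc
  have hscale : lam * (L / 2 * (lam⁻¹ ^ 2 * ‖x' - x‖ ^ 2)) = L / lam * (1 / 2 * ‖x' - x‖ ^ 2) := by
    field_simp
  have hmix : (1 + lam) * f z'' ≤ lam * f w + f z := by
    have := mul_le_mul_of_nonneg_left hconv h1lam.le
    rwa [mul_add, ← mul_assoc, ← mul_assoc, mul_div_cancel₀ _ h1lam.ne',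
      mul_one_div_cancel h1lam.ne', one_mul] at this
  unfold breg at hdesc ⊢
  linarith [mul_le_mul_of_nonneg_left hdesc hlam.le]

-- One block of the extragradient step. The coupling enters only through its values `G`, `G'`,
-- `Gs` at the current point, the half-step and the saddle point; `δ` is the displacement of the
-- other block during the half-step.
theorem extragradient_block_le (hf : ConvexOn ℝ Set.univ f) (hf' : ∀ x, HasGradientAt f (f' x) x)
    (hL0 : 0 ≤ L) (hL : ∀ a b, ‖f' a - f' b‖ ≤ L * ‖a - b‖) {μ ν α β lam δ : ℝ}
    (hμ : 0 < μ) (hν : 0 < ν) (hα : 0 ≤ α) (hβ : 0 ≤ β)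
    (hlam : 1 + √(L / μ) + α / μ + β / √(μ * ν) ≤ lam) {x z x' z' x'' z'' s G G' Gs : E}
    (hx' : x' = x - (1 / (lam * μ)) • (μ • x + f' z + G))
    (hz' : z' = (1 - 1 / lam) • z + (1 / lam) • x)
    (hx'' : x'' = (1 / (1 + lam)) • x' + (lam / (1 + lam)) • x
      - (1 / ((1 + lam) * μ)) • (μ • x' + f' z' + G'))
    (hz'' : z'' = (lam / (1 + lam)) • z + (1 / (1 + lam)) • x')
    (hs : f' s + Gs + μ • s = 0) (hG : ‖G' - G‖ ≤ α * ‖x' - x‖ + β * δ) :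
    (1 + lam) * (μ * (1 / 2 * ‖x'' - s‖ ^ 2) + breg f f' s z'')
      ≤ lam * (μ * (1 / 2 * ‖x - s‖ ^ 2) + breg f f' s z) - ⟪G' - Gs, x' - s⟫
        + β / √(μ * ν) * (ν * (1 / 2 * δ ^ 2)) - β / √(μ * ν) * (μ * (1 / 2 * ‖x' - x‖ ^ 2)) := by
  set r := √(L / μ)
  set c := β / √(μ * ν)
  have hr : 0 ≤ r := Real.sqrt_nonneg _
  have hc : 0 ≤ c := by positivity
  have hlam0 : 0 < lam := by linarith [div_nonneg hα hμ.le]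
  have hLr : L = r ^ 2 * μ := by
    rw [Real.sq_sqrt (div_nonneg hL0 hμ.le)]
    field_simp
  have hβc : β = c * (√μ * √ν) := by
    rw [← Real.sqrt_mul hμ.le]
    exact (div_mul_cancel₀ β (by positivity)).symm
  have hbudget : μ + α + r * μ + c * μ ≤ lam * μ := by
    have := mul_le_mul_of_nonneg_right hlam hμ.le
    rw [add_mul, add_mul, add_mul, one_mul, div_mul_cancel₀ _ hμ.ne'] at this
    linarith
  have hLlam : L / lam ≤ r * μ := by
    rw [hLr, div_le_iff₀ hlam0]
    nlinarith [mul_nonneg hr hμ.le, div_nonneg hα hμ.le]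
  have ex' : (lam * μ) • (x - x') = μ • x + f' z + G := by
    rw [hx', sub_sub_cancel, smul_smul, mul_one_div_cancel (by positivity), one_smul]
  have ez' : lam • z' = (lam - 1) • z + x := by
    rw [hz']
    match_scalars <;> field_simp
  have ex'' : μ • (x' - x'') + (lam * μ) • (x - x'') = μ • x' + f' z' + G' := by
    rw [hx'']
    match_scalars <;> field_simp <;> ring
  have ez'' : (1 + lam) • z'' = lam • z + x' := by
    rw [hz'']
    match_scalars <;> field_simp
  have hcoco : ‖f' z' - f' z‖ ^ 2 ≤ 2 * (r ^ 2 * μ) * breg f f' z' z := by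
    rw [norm_sub_rev, ← hLr]
    exact sq_norm_sub_le_two_mul_breg hf hf' hL0 hL z z'
  have hinner := inner_smul_add_add_le (w := x' - x'') hμ hν.le hα hr hc hcoco (hβc ▸ hG)
  have hbreg := breg_extrapolation_le hf hf' hL hlam0 ez' ez''
  have hB₁ := breg_nonneg hf (hf' z') s
  have hB₂ := breg_nonneg hf (hf' z') z
  have hV₁ : 0 ≤ μ * (1 / 2 * ‖x' - s‖ ^ 2) := by positivity
  have hV₂ : 0 ≤ 1 / 2 * ‖x' - x''‖ ^ 2 := by positivity
  have hV₃ : 0 ≤ 1 / 2 * ‖x' - x‖ ^ 2 := by positivity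
  rw [extragradient_block_identity ex' ex'' ez'' hs]
  linarith [mul_le_mul_of_nonneg_right hbudget hV₂, mul_le_mul_of_nonneg_right hbudget hV₃,
    mul_le_mul_of_nonneg_right hLlam hV₃, mul_nonneg hμ.le hV₂,
    mul_nonneg (by linarith [div_nonneg hα hμ.le] : 0 ≤ lam - 1 - r) hB₂]

end ConvexSmooth

theorem inner_sub_sub_inner_sub_nonneg_of_convexConcave {X Y : Type*} [NormedAddCommGroup X]
    [InnerProductSpace ℝ X] [CompleteSpace X] [NormedAddCommGroup Y] [InnerProductSpace ℝ Y]
    [CompleteSpace Y] {h : X × Y → ℝ} {gx : X × Y → X} {gy : X × Y → Y}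
    (hcx : ∀ y, ConvexOn ℝ Set.univ (fun x => h (x, y)))
    (hcy : ∀ x, ConcaveOn ℝ Set.univ (fun y => h (x, y)))
    (hgx : ∀ p : X × Y, HasGradientAt (fun x => h (x, p.2)) (gx p) p.1)
    (hgy : ∀ p : X × Y, HasGradientAt (fun y => h (p.1, y)) (gy p) p.2) (p q : X × Y) :
    0 ≤ ⟪gx p - gx q, p.1 - q.1⟫ - ⟪gy p - gy q, p.2 - q.2⟫ := by
  obtain ⟨p₁, p₂⟩ := p
  obtain ⟨q₁, q₂⟩ := q
  have h₁ := breg_nonneg (f' := fun x => gx (x, p₂)) (hcx p₂) (hgx (p₁, p₂)) q₁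
  have h₂ := breg_nonneg (f' := fun x => gx (x, q₂)) (hcx q₂) (hgx (q₁, q₂)) p₁
  have h₃ := breg_nonneg (f' := fun y => -gy (p₁, y)) (hcy p₁).neg (hgy (p₁, p₂)).neg q₂
  have h₄ := breg_nonneg (f' := fun y => -gy (q₁, y)) (hcy q₁).neg (hgy (q₁, q₂)).neg p₂
  simp only [breg, Pi.neg_apply, inner_neg_left, inner_sub_left, inner_sub_right] at h₁ h₂ h₃ h₄ ⊢
  linarith

theorem le_pow_mul_of_forall_one_add_mul_le {u : ℕ → ℝ} {lam : ℝ} (hlam : 0 ≤ lam)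
    (h : ∀ t, (1 + lam) * u (t + 1) ≤ lam * u t) (t : ℕ) :
    u t ≤ (lam / (1 + lam)) ^ t * u 0 :=
  le_geom (by positivity) t fun k _ => by
    rw [div_mul_eq_mul_div, le_div_iff₀ (by positivity)]
    linarith [h k]

/-- Linear convergence of the explicit extragradient recursion for separable minimax problems:
with `λ = 1 + √(Lˣ/μˣ) + √(Lʸ/μʸ) + Λˣˣ/μˣ + Λˣʸ/√(μˣμʸ) + Λʸʸ/μʸ`, the potential
`μˣ V_{zˣ_t}(x⋆) + μʸ V_{zʸ_t}(y⋆) + V^f_{x⋆}(z^f_t) + V^g_{y⋆}(z^g_t)` contracts by a factor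
`λ/(1+λ)` each iteration. -/
theorem stmt_8 {X Y : Type*} [NormedAddCommGroup X] [InnerProductSpace ℝ X]
    [FiniteDimensional ℝ X] [NormedAddCommGroup Y] [InnerProductSpace ℝ Y]
    [FiniteDimensional ℝ Y]
    (f : X → ℝ) (f' : X → X) (g : Y → ℝ) (g' : Y → Y)
    (h : X × Y → ℝ) (hx : X × Y → X) (hy : X × Y → Y)
    (μx μy Lx Ly Λxx Λxy Λyy : ℝ) (hμx : 0 < μx) (hμy : 0 < μy)
    (hLx : 0 ≤ Lx) (hLy : 0 ≤ Ly) (hΛxx : 0 ≤ Λxx) (hΛxy : 0 ≤ Λxy) (hΛyy : 0 ≤ Λyy)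
    (hfconv : ConvexOn ℝ Set.univ f) (hgconv : ConvexOn ℝ Set.univ g)
    (hfd : ∀ x, HasGradientAt f (f' x) x) (hgd : ∀ y, HasGradientAt g (g' y) y)
    (hfsmooth : ∀ a b : X, ‖f' a - f' b‖ ≤ Lx * ‖a - b‖)
    (hgsmooth : ∀ a b : Y, ‖g' a - g' b‖ ≤ Ly * ‖a - b‖)
    (hcc₁ : ∀ y : Y, ConvexOn ℝ Set.univ (fun x => h (x, y)))
    (hcc₂ : ∀ x : X, ConcaveOn ℝ Set.univ (fun y => h (x, y)))
    (hdx : ∀ p : X × Y, HasGradientAt (fun x => h (x, p.2)) (hx p) p.1)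
    (hdy : ∀ p : X × Y, HasGradientAt (fun y => h (p.1, y)) (hy p) p.2)
    (hlip₁ : ∀ u v : X × Y, ‖hx u - hx v‖ ≤ Λxx * ‖u.1 - v.1‖ + Λxy * ‖u.2 - v.2‖)
    (hlip₂ : ∀ u v : X × Y, ‖hy u - hy v‖ ≤ Λxy * ‖u.1 - v.1‖ + Λyy * ‖u.2 - v.2‖)
    -- `F(x, y) := f(x) + h(x, y) − g(y) + (μˣ/2)‖x‖² − (μʸ/2)‖y‖²` has saddle point `(x⋆, y⋆)`
    (F : X → Y → ℝ)
    (hF : ∀ x y, F x y = f x + h (x, y) - g y + μx / 2 * ‖x‖ ^ 2 - μy / 2 * ‖y‖ ^ 2)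
    (xs : X) (ys : Y)
    (hsaddle₁ : ∀ y, F xs y ≤ F xs ys) (hsaddle₂ : ∀ x, F xs ys ≤ F x ys)
    -- step size
    (lam : ℝ)
    (hlam : lam = 1 + Real.sqrt (Lx / μx) + Real.sqrt (Ly / μy)
        + Λxx / μx + Λxy / Real.sqrt (μx * μy) + Λyy / μy)
    -- iterates and half-iterates of the extragradient recursion
    (zx zf zx2 zf2 : ℕ → X) (zy zg zy2 zg2 : ℕ → Y)
    (hstep₁ : ∀ t, zx2 t = zx t
        - (1 / (lam * μx)) • (μx • zx t + f' (zf t) + hx (zx t, zy t)))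
    (hstep₂ : ∀ t, zy2 t = zy t
        - (1 / (lam * μy)) • (μy • zy t + g' (zg t) - hy (zx t, zy t)))
    (hstep₃ : ∀ t, zf2 t = (1 - 1 / lam) • zf t + (1 / lam) • zx t)
    (hstep₄ : ∀ t, zg2 t = (1 - 1 / lam) • zg t + (1 / lam) • zy t)
    (hstep₅ : ∀ t, zx (t + 1) = (1 / (1 + lam)) • zx2 t + (lam / (1 + lam)) • zx t
        - (1 / ((1 + lam) * μx)) • (μx • zx2 t + f' (zf2 t) + hx (zx2 t, zy2 t)))
    (hstep₆ : ∀ t, zy (t + 1) = (1 / (1 + lam)) • zy2 t + (lam / (1 + lam)) • zy t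
        - (1 / ((1 + lam) * μy)) • (μy • zy2 t + g' (zg2 t) - hy (zx2 t, zy2 t)))
    (hstep₇ : ∀ t, zf (t + 1) = (lam / (1 + lam)) • zf t + (1 / (1 + lam)) • zx2 t)
    (hstep₈ : ∀ t, zg (t + 1) = (lam / (1 + lam)) • zg t + (1 / (1 + lam)) • zy2 t) :
    ∀ t : ℕ,
      μx * (1 / 2 * ‖zx t - xs‖ ^ 2) + μy * (1 / 2 * ‖zy t - ys‖ ^ 2)
          + breg f f' xs (zf t) + breg g g' ys (zg t)
        ≤ (lam / (1 + lam)) ^ t *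
            (μx * (1 / 2 * ‖zx 0 - xs‖ ^ 2) + μy * (1 / 2 * ‖zy 0 - ys‖ ^ 2)
              + breg f f' xs (zf 0) + breg g g' ys (zg 0)) := by
  have hlamX : 1 + √(Lx / μx) + Λxx / μx + Λxy / √(μx * μy) ≤ lam := by
    rw [hlam]
    linarith [Real.sqrt_nonneg (Ly / μy), div_nonneg hΛyy hμy.le]
  have hlamY : 1 + √(Ly / μy) + Λyy / μy + Λxy / √(μy * μx) ≤ lam := by
    rw [mul_comm μy μx, hlam]
    linarith [Real.sqrt_nonneg (Lx / μx), div_nonneg hΛxx hμx.le]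
  have hlam0 : 0 ≤ lam := by
    linarith [Real.sqrt_nonneg (Lx / μx), div_nonneg hΛxx hμx.le,
      div_nonneg hΛxy (Real.sqrt_nonneg (μx * μy))]
  have hxs : f' xs + hx (xs, ys) + μx • xs = 0 := by
    have hgrad : HasGradientAt (fun x => h (x, ys)) (hx (xs, ys)) xs := hdx (xs, ys)
    refine (((hfd xs).add hgrad).add_half_mul_norm_sq μx).eq_zero_of_forall_le fun x => ?_
    have := hsaddle₂ x
    rw [hF, hF] at this
    linarith
  have hys : g' ys + -hy (xs, ys) + μy • ys = 0 := by
    have hgrad : HasGradientAt (fun y => h (xs, y)) (hy (xs, ys)) ys := hdy (xs, ys)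
    refine (((hgd ys).add hgrad.neg).add_half_mul_norm_sq μy).eq_zero_of_forall_le fun y => ?_
    have := hsaddle₁ y
    rw [hF, hF] at this
    linarith
  refine le_pow_mul_of_forall_one_add_mul_le hlam0 fun k => ?_
  have hX := extragradient_block_le hfconv hfd hLx hfsmooth hμx hμy hΛxx hΛxy hlamX
    (hstep₁ k) (hstep₃ k) (hstep₅ k) (hstep₇ k) hxs (hlip₁ (zx2 k, zy2 k) (zx k, zy k))
  -- the `y`-block is an `x`-block for `g`, with coupling field `-∇_y h`
  have hY := extragradient_block_le hgconv hgd hLy hgsmooth hμy hμx hΛyy hΛxy hlamY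
    (by simpa only [sub_eq_add_neg] using hstep₂ k) (hstep₄ k)
    (by simpa only [sub_eq_add_neg] using hstep₆ k) (hstep₈ k) hys
    (δ := ‖zx2 k - zx k‖) (by
      rw [neg_sub_neg, norm_sub_rev]
      linarith [hlip₂ (zx2 k, zy2 k) (zx k, zy k)])
  have hmono :=
    inner_sub_sub_inner_sub_nonneg_of_convexConcave hcc₁ hcc₂ hdx hdy (zx2 k, zy2 k) (xs, ys)
  rw [mul_comm μy μx, neg_sub_neg, ← neg_sub (hy (zx2 k, zy2 k)), inner_neg_left] at hY
  dsimp only at hX hmono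
  linarith
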